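/- For all closed-style marked terms λx.M and N in Λ•, the read-back of the application (λx.M) N β-reduces in one step to the read-back of M[x:=N]. Formally: RB((λx.M) N) → RB(M[x:=N]). -/

import Mathlib

/-- Lambda terms, extended with "atoms" `⌈M⌉` that wrap a term. -/
inductive Tm : Type
  | var : String → Tm
  | app : Tm → Tm → Tm
  | lam : String → Tm → Tm
  | atom : Tm → Tm
deriving DecidableEq

namespace Tm

/-- A pure lambda term (an element of Λ): contains no atoms. -/
def Pure : Tm → Prop
  | var _ => True
  | app a b => Pure a ∧ Pure b
  | lam _ m => Pure m
  | atom _ => False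

/-- Free variables; atoms have no free variables. -/
def FV : Tm → Finset String
  | var x => {x}
  | app a b => FV a ∪ FV b
  | lam x m => FV m \ {x}
  | atom _ => ∅

/-- Substitution; atoms are unaffected. -/
def subst : Tm → String → Tm → Tm
  | var y, x, N => if y = x then N else var y
  | app a b, x, N => app (a.subst x N) (b.subst x N)
  | lam y m, x, N => if y = x then lam y m else lam y (m.subst x N)
  | atom m, _, _ => atom m

/-- `apps M [N₁,…,Nₙ] = M N₁ ⋯ Nₙ`. -/
def apps (M : Tm) (Ns : List Tm) : Tm := Ns.foldl app M

/-- Replace each free variable `x` (not in the bound list) by the atom `⌈x⌉`. -/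
def bulletAux : List String → Tm → Tm
  | bs, var x => if x ∈ bs then var x else atom (var x)
  | bs, app a b => app (bulletAux bs a) (bulletAux bs b)
  | bs, lam x m => lam x (bulletAux (x :: bs) m)
  | _, atom m => atom m

/-- `M•`: replace each free variable `x` of `M` by the atom `⌈x⌉`. -/
def bullet (M : Tm) : Tm := bulletAux [] M

/-- Read-back `RB : Λ• → Λ`: `RB (M N) = RB M (RB N)`,
`RB (λx.M) = λx.RB (M[x:=⌈x⌉])`, `RB ⌈M⌉ = M` (stated structurally,
which agrees with the above since `RB (M[x:=⌈x⌉]) = RB M` here). -/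
def RB : Tm → Tm
  | var x => var x
  | app a b => app (RB a) (RB b)
  | lam x m => lam x (RB m)
  | atom m => m

end Tm

/-- Membership in Λ• = { M• | M ∈ Λ }. -/
def IsBullet (M : Tm) : Prop := ∃ P : Tm, P.Pure ∧ M = P.bullet

/-- One-step β-reduction (atoms are inert). -/
inductive Beta : Tm → Tm → Prop
  | beta (x M N) : Beta (.app (.lam x M) N) (M.subst x N)
  | appL {M M'} (N) : Beta M M' → Beta (.app M N) (.app M' N)
  | appR (M) {N N'} : Beta N N' → Beta (.app M N) (.app M N')
  | lam (x) {M M'} : Beta M M' → Beta (.lam x M) (.lam x M')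

/-- β-normal form. -/
def NF (M : Tm) : Prop := ∀ N, ¬ Beta M N

/-- One-hole contexts. -/
inductive Ctx : Type
  | hole
  | appL : Ctx → Tm → Ctx
  | appR : Tm → Ctx → Ctx
  | lam : String → Ctx → Ctx

namespace Ctx

/-- `C[M]`: fill the hole of `C` with `M`. -/
def fill : Ctx → Tm → Tm
  | hole, M => M
  | appL C N, M => .app (C.fill M) N
  | appR N C, M => .app N (C.fill M)
  | lam x C, M => .lam x (C.fill M)

/-- Composition of contexts: `(C.comp D)[M] = C[D[M]]`. -/
def comp : Ctx → Ctx → Ctx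
  | hole, D => D
  | appL C N, D => appL (C.comp D) N
  | appR N C, D => appR N (C.comp D)
  | lam x C, D => lam x (C.comp D)

/-- A context over pure lambda terms. -/
def Pure : Ctx → Prop
  | hole => True
  | appL C N => C.Pure ∧ N.Pure
  | appR N C => N.Pure ∧ C.Pure
  | lam _ C => C.Pure

end Ctx

/-- A context is normal iff it maps β-normal forms to β-normal forms. -/
def NormalCtx (C : Ctx) : Prop := ∀ M, NF M → NF (C.fill M)

/-- The set Λ^rb: atoms `⌈M⌉`; pairs `⟨C[·], M⟩` with `M ∈ Λ•`
(applications `M ⃗N` with head in `Λ•` are encoded inside the `Tm`);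
and `⟨C[·], M ⃗N⟩` with `M ∈ Λ^rb`, `⃗N ∈ Λ•`. -/
inductive Rb : Type
  | atom : Tm → Rb
  | pair : Ctx → Tm → Rb
  | papp : Ctx → Rb → List Tm → Rb

namespace Rb

/-- Well-formedness: side conditions of membership in Λ^rb. -/
def WF : Rb → Prop
  | atom M => M.Pure
  | pair C M => C.Pure ∧ IsBullet M
  | papp C M Ns => C.Pure ∧ M.WF ∧ ∀ N ∈ Ns, IsBullet N

/-- Read-back on Λ^rb. -/
def rb : Rb → Tm
  | atom M => M
  | pair C M => C.fill M.RB
  | papp C M Ns => C.fill (Tm.apps M.rb (Ns.map Tm.RB))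

end Rb

/-- The reduction relation on Λ^rb (Definition 4 of the paper). -/
inductive Step : Rb → Rb → Prop
  | collapse (C M) : Step (.pair C (.atom M)) (.atom (C.fill M))
  | lam (C x M) :
      Step (.pair C (.lam x M))
        (.pair (C.comp (.lam x .hole)) (M.subst x (.atom (.var x))))
  | split (C M N₀ Ns) :
      Step (.pair C (Tm.apps (.atom M) (N₀ :: Ns)))
        (.papp C (.pair (.appR M .hole) N₀) Ns)
  | beta (C x M N₀ Ns) :
      Step (.pair C (Tm.apps (.lam x M) (N₀ :: Ns)))
        (.pair C (Tm.apps (M.subst x N₀) Ns))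
  | collapseNil (C M) : Step (.papp C (.atom M) []) (.atom (C.fill M))
  | splitCons (C M N₀ Ns) :
      Step (.papp C (.atom M) (N₀ :: Ns)) (.papp C (.pair (.appR M .hole) N₀) Ns)
  | cong (C Ns) {M M'} : Step M M' → Step (.papp C M Ns) (.papp C M' Ns)

/-- The steps of `Step` that contract a β-redex (rule 4, possibly under head congruence). -/
inductive BStep : Rb → Rb → Prop
  | beta (C x M N₀ Ns) :
      BStep (.pair C (Tm.apps (.lam x M) (N₀ :: Ns)))
        (.pair C (Tm.apps (M.subst x N₀) Ns))
  | cong (C Ns) {M M'} : BStep M M' → BStep (.papp C M Ns) (.papp C M' Ns)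

/-- Contraction of the leftmost β-redex. -/
inductive Leftmost : Tm → Tm → Prop
  | beta (x M N) : Leftmost (.app (.lam x M) N) (M.subst x N)
  | lam (x) {M M'} : Leftmost M M' → Leftmost (.lam x M) (.lam x M')
  | appL {M M'} (N) : (∀ x M₀, M ≠ Tm.lam x M₀) → Leftmost M M' →
      Leftmost (.app M N) (.app M' N)
  | appR (M) {N N'} : NF M → (∀ x M₀, M ≠ Tm.lam x M₀) → Leftmost N N' →
      Leftmost (.app M N) (.app M N')

/-! Contracting the redex `(λx.M) N` inside a term of `Λ•` commutes with read-back, because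
read-back only unwraps atoms and substitution leaves them untouched. The one obstruction would
be an atom of `M` mentioning `x` freely: unwrapping it would expose a fresh occurrence of `x`
to the substitution. In `Λ•` this cannot happen, since the atoms `⌈y⌉` of `(λx.P)•` are
created only for variables `y` free in `λx.P`, hence `y ≠ x`. -/

namespace Tm

def NotFreeInAtoms (x : String) : Tm → Prop
  | var _ => True
  | app a b => NotFreeInAtoms x a ∧ NotFreeInAtoms x b
  | lam _ m => NotFreeInAtoms x m
  | atom m => x ∉ m.FV

theorem subst_of_notMem_FV {x : String} (K : Tm) {M : Tm} (h : x ∉ M.FV) :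
    M.subst x K = M := by
  induction M with
  | var y =>
    have hyx : y ≠ x := by simpa [FV, eq_comm] using h
    simp [subst, hyx]
  | app a b iha ihb =>
    simp only [FV, Finset.mem_union, not_or] at h
    simp [subst, iha h.1, ihb h.2]
  | lam y m ih =>
    by_cases hyx : y = x
    · simp [subst, hyx]
    · have hm : x ∉ m.FV := by simpa [FV, Ne.symm hyx] using h
      simp [subst, hyx, ih hm]
  | atom m => rfl

theorem RB_subst {x : String} (N : Tm) {M : Tm} (h : NotFreeInAtoms x M) :
    RB (M.subst x N) = (RB M).subst x (RB N) := by
  induction M with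
  | var y => by_cases hyx : y = x <;> simp [subst, RB, hyx]
  | app a b iha ihb => simp [subst, RB, iha h.1, ihb h.2]
  | lam y m ih => by_cases hyx : y = x <;> simp [subst, RB, hyx, ih h]
  | atom m => exact (subst_of_notMem_FV (RB N) h).symm

theorem notFreeInAtoms_bulletAux {x : String} {P : Tm} (hP : P.Pure) {bs : List String}
    (hx : x ∈ bs) : NotFreeInAtoms x (bulletAux bs P) := by
  induction P generalizing bs with
  | var y =>
    by_cases hy : y ∈ bs
    · simp [bulletAux, hy, NotFreeInAtoms]
    · have hyx : y ≠ x := fun e => hy (e ▸ hx)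
      simp [bulletAux, hy, NotFreeInAtoms, FV, hyx.symm]
  | app a b iha ihb => exact ⟨iha hP.1 hx, ihb hP.2 hx⟩
  | lam y m ih => exact ih hP (List.mem_cons_of_mem y hx)
  | atom m => exact hP.elim

theorem notFreeInAtoms_of_isBullet_lam {x : String} {M : Tm} (h : IsBullet (lam x M)) :
    NotFreeInAtoms x M := by
  obtain ⟨P, hP, hPM⟩ := h
  cases P with
  | lam y m =>
    simp only [bullet, bulletAux, lam.injEq] at hPM
    obtain ⟨rfl, rfl⟩ := hPM
    exact notFreeInAtoms_bulletAux (P := m) hP (List.mem_singleton_self x)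
  | var _ | app _ _ | atom _ => simp [bullet, bulletAux] at hPM

end Tm

theorem rb_beta_general (x : String) (M N : Tm)
    (hM : IsBullet (Tm.lam x M)) :
    Beta (Tm.RB (.app (.lam x M) N)) (Tm.RB (M.subst x N)) := by
  rw [Tm.RB_subst N (Tm.notFreeInAtoms_of_isBullet_lam hM)]
  exact .beta x (Tm.RB M) (Tm.RB N)

/-- `RB ((λx.M) N) →β RB (M[x:=N])` for `λx.M, N ∈ Λ•`. -/
theorem rb_beta (x : String) (M N : Tm)
    (hM : IsBullet (Tm.lam x M)) (hN : IsBullet N) :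
    Beta (Tm.RB (.app (.lam x M) N)) (Tm.RB (M.subst x N)) :=
  rb_beta_general x M N hM
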